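/- Let E be a separable Banach space, B ⊂ L¹([a,b], E) countable and integrably bounded (there is c ∈ L¹([a,b]) with ‖w(t)‖ ≤ c(t) for all w ∈ B and a.e. t). Define φ(t) := β({u(t) : u ∈ B}). Then φ ∈ L¹([a,b]) and β({ ∫_a^b u(τ) dτ : u ∈ B }) ≤ ∫_a^b φ(τ) dτ. -/

import Mathlib

/-!
Fix a dense sequence `e` in `E`. For a bounded set, `β` is the infimum over `m` of the radius
needed to cover it by balls around `e 0, …, e m`; for a countable family of measurable functions
this radius is measurable in `t`, so `φ` is measurable, and `φ ≤ |c|` makes it integrable.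

For the inequality, given `η > 0` choose measurably a level `K t` and, for each `u ∈ B`, an index
`σ_u t ≤ K t` with `‖u t - e (σ_u t)‖ ≤ φ t + η`; then `∫ u` is within `∫ φ + (b - a) η` of
`∫ e ∘ σ_u`. These integrals form a totally bounded set: the `e ∘ σ_u` are dominated by
`c + φ + η` uniformly in `u`, so for large `M` their integrals over `{K > M}` are uniformly small,
while their integrals over `{K ≤ M}` lie in the compact set `[0, b - a] • conv {e 0, …, e M}`.
-/

open Bornology Set MeasureTheory

/-- Hausdorff measure of noncompactness. -/
noncomputable def hmnc {E : Type*} [NormedAddCommGroup E] (Ω : Set E) : ℝ :=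
  sInf {r : ℝ | 0 < r ∧ ∃ S : Finset E, Ω ⊆ ⋃ x ∈ S, Metric.ball x r}

open scoped ENNReal Pointwise
open Metric TopologicalSpace

section hmnc

variable {E : Type*} [NormedAddCommGroup E]

lemma hmnc_nonneg (Ω : Set E) : 0 ≤ hmnc Ω :=
  Real.sInf_nonneg fun _ hr => hr.1.le

lemma hmnc_le {Ω : Set E} {r : ℝ} (hr : 0 < r) (h : ∃ S : Finset E, Ω ⊆ ⋃ x ∈ S, ball x r) :
    hmnc Ω ≤ r :=
  csInf_le ⟨0, fun _ hs => hs.1.le⟩ ⟨hr, h⟩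

lemma hmnc_le_of_forall_exists_dist_le {Ω K : Set E} (hK : TotallyBounded K) {d : ℝ}
    (hd : 0 ≤ d) (h : ∀ x ∈ Ω, ∃ y ∈ K, dist x y ≤ d) : hmnc Ω ≤ d := by
  refine le_of_forall_pos_le_add fun ε hε => ?_
  obtain ⟨F, hF, hKF⟩ := totallyBounded_iff.1 hK ε hε
  refine hmnc_le (by positivity) ⟨hF.toFinset, fun x hx => ?_⟩
  obtain ⟨y, hyK, hxy⟩ := h x hx
  obtain ⟨z, hzF, hyz⟩ := mem_iUnion₂.1 (hKF hyK)
  exact mem_iUnion₂.2 ⟨z, hF.mem_toFinset.2 hzF,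
    (dist_triangle x y z).trans_lt (add_lt_add_of_le_of_lt hxy hyz)⟩

lemma hmnc_le_of_subset_closedBall {Ω : Set E} {R : ℝ} (hR : 0 ≤ R)
    (h : Ω ⊆ closedBall 0 R) : hmnc Ω ≤ R :=
  hmnc_le_of_forall_exists_dist_le (finite_singleton 0).totallyBounded hR
    fun _ hx => ⟨0, rfl, h hx⟩

noncomputable def netRadius (e : ℕ → E) (m : ℕ) (Ω : Set E) : ℝ≥0∞ :=
  ⨆ x ∈ Ω, ⨅ k : Fin (m + 1), ‖x - e k‖ₑ

lemma exists_netRadius_le_of_subset_iUnion_ball {e : ℕ → E} (he : DenseRange e) {Ω : Set E}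
    {S : Finset E} {r ε : ℝ} (hε : 0 < ε) (hS : Ω ⊆ ⋃ x ∈ S, ball x r) :
    ∃ m, netRadius e m Ω ≤ ENNReal.ofReal (r + ε) := by
  choose k hk using fun s : E => he.exists_dist_lt s hε
  refine ⟨S.sup k, iSup₂_le fun x hx => ?_⟩
  obtain ⟨s, hsS, hxs⟩ := mem_iUnion₂.1 (hS hx)
  refine (iInf_le _ ⟨k s, Nat.lt_succ_of_le (Finset.le_sup hsS)⟩).trans ?_
  rw [← ofReal_norm, ← dist_eq_norm]
  exact ENNReal.ofReal_le_ofReal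
    ((dist_triangle x s (e (k s))).trans (add_le_add (mem_ball.1 hxs).le (hk s).le))

lemma ofReal_hmnc_le_netRadius (e : ℕ → E) (m : ℕ) (Ω : Set E) :
    ENNReal.ofReal (hmnc Ω) ≤ netRadius e m Ω := by
  rcases eq_or_ne (netRadius e m Ω) ∞ with h | h
  · exact h ▸ le_top
  refine ENNReal.ofReal_le_of_le_toReal (hmnc_le_of_forall_exists_dist_le
    (finite_range fun k : Fin (m + 1) => e k).totallyBounded ENNReal.toReal_nonneg fun x hx => ?_)
  obtain ⟨k, hk⟩ := exists_eq_ciInf_of_finite (f := fun k : Fin (m + 1) => ‖x - e k‖ₑ)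
  refine ⟨e k, mem_range_self k, ?_⟩
  rw [dist_eq_norm, ← ENNReal.toReal_ofReal (norm_nonneg _), ofReal_norm, hk]
  exact ENNReal.toReal_mono h (le_iSup₂_of_le x hx le_rfl)

theorem ofReal_hmnc_eq_iInf_netRadius {e : ℕ → E} (he : DenseRange e) {Ω : Set E}
    (hΩ : IsBounded Ω) : ENNReal.ofReal (hmnc Ω) = ⨅ m, netRadius e m Ω := by
  refine le_antisymm (le_iInf fun m => ofReal_hmnc_le_netRadius e m Ω)
    (ENNReal.le_of_forall_pos_le_add fun ε hε _ => ?_)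
  obtain ⟨R, hR, hΩR⟩ := hΩ.subset_ball_lt 0 0
  have hne : {r : ℝ | 0 < r ∧ ∃ S : Finset E, Ω ⊆ ⋃ x ∈ S, ball x r}.Nonempty :=
    ⟨R, hR, {0}, by simpa using hΩR⟩
  have hδ : (0 : ℝ) < ε / 2 := by positivity
  obtain ⟨r, ⟨-, S, hS⟩, hr⟩ := exists_lt_of_csInf_lt hne (lt_add_of_pos_right (hmnc Ω) hδ)
  obtain ⟨m, hm⟩ := exists_netRadius_le_of_subset_iUnion_ball he hδ hS
  calc ⨅ m, netRadius e m Ω ≤ ENNReal.ofReal (r + ε / 2) := iInf_le_of_le m hm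
    _ ≤ ENNReal.ofReal (hmnc Ω + ε) := ENNReal.ofReal_le_ofReal (by linarith [hr])
    _ = ENNReal.ofReal (hmnc Ω) + ε := by simp [ENNReal.ofReal_add, hmnc_nonneg]

end hmnc

section integral

variable {α ι E : Type*} [MeasurableSpace α] [NormedAddCommGroup E]

lemma measurable_netRadius_range [Countable ι] {U : ι → α → E} (hU : ∀ i, StronglyMeasurable (U i))
    (e : ℕ → E) (m : ℕ) : Measurable fun t => netRadius e m (range fun i => U i t) := by
  simp only [netRadius, iSup_range]
  exact Measurable.iSup fun i => Measurable.iInf fun k =>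
    ((hU i).sub stronglyMeasurable_const).enorm

lemma exists_measurable_netIndex [Countable ι] {U : ι → α → E} (hU : ∀ i, StronglyMeasurable (U i))
    (e : ℕ → E) {ε : ℝ≥0∞} (hε : ε ≠ 0) :
    ∃ K : α → ℕ, Measurable K ∧ ∃ σ : ι → α → ℕ, (∀ i, Measurable (σ i)) ∧ ∀ i t, σ i t ≤ K t ∧
      ‖U i t - e (σ i t)‖ₑ ≤ (⨅ m, netRadius e m (range fun i => U i t)) + ε := by
  classical
  set q := fun t => ⨅ m, netRadius e m (range fun i => U i t)
  have hq : Measurable q := Measurable.iInf (measurable_netRadius_range hU e)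
  have hK : ∀ t, ∃ m, netRadius e m (range fun i => U i t) ≤ q t + ε := by
    intro t
    rcases eq_or_ne (q t) ∞ with h | h
    · exact ⟨0, by simp [h]⟩
    · obtain ⟨m, hm⟩ := iInf_lt_iff.1 (ENNReal.lt_add_right h hε)
      exact ⟨m, hm.le⟩
  set K := fun t => Nat.find (hK t)
  have hKm : Measurable K :=
    measurable_find hK fun m =>
      measurableSet_le (measurable_netRadius_range hU e m) (hq.add_const ε)
  have hσ : ∀ i t, ∃ k, k ≤ K t ∧ ‖U i t - e k‖ₑ ≤ q t + ε := by
    intro i t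
    obtain ⟨k, hk⟩ := exists_eq_ciInf_of_finite (f := fun k : Fin (K t + 1) => ‖U i t - e k‖ₑ)
    refine ⟨k, Fin.is_le k, ?_⟩
    calc ‖U i t - e k‖ₑ = ⨅ k : Fin (K t + 1), ‖U i t - e k‖ₑ := hk
      _ ≤ netRadius e (K t) (range fun i => U i t) :=
        le_iSup₂_of_le (U i t) (mem_range_self i) le_rfl
      _ ≤ q t + ε := Nat.find_spec (hK t)
  refine ⟨K, hKm, fun i t => Nat.find (hσ i t), fun i => measurable_find (hσ i) fun k => ?_,
    fun i t => Nat.find_spec (hσ i t)⟩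
  exact (measurableSet_le measurable_const hKm).inter
    (measurableSet_le ((hU i).sub stronglyMeasurable_const).enorm (hq.add_const ε))

lemma exists_setIntegral_compl_lt {μ : Measure α} {h : α → ℝ} (hh : Integrable h μ)
    {K : α → ℕ} (hK : Measurable K) {δ : ℝ} (hδ : 0 < δ) :
    ∃ M, ∫ t in {t | K t ≤ M}ᶜ, h t ∂μ < δ := by
  have hanti : Antitone fun M => {t | K t ≤ M}ᶜ :=
    fun M N hMN => compl_subset_compl.2 fun t ht => le_trans ht hMN
  have hempty : ⋂ M, {t | K t ≤ M}ᶜ = ∅ :=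
    eq_empty_of_forall_notMem fun t ht => mem_iInter.1 ht (K t) (le_refl (K t))
  have htends := tendsto_setIntegral_of_antitone (s := fun M => {t | K t ≤ M}ᶜ)
    (fun M => (hK measurableSet_Iic).compl) hanti ⟨0, hh.integrableOn⟩
  rw [hempty, Measure.restrict_empty, integral_zero_measure] at htends
  exact (htends.eventually (gt_mem_nhds hδ)).exists

variable [NormedSpace ℝ E]

lemma integral_mem_Icc_smul_convexHull [CompleteSpace E] {μ : Measure α} [IsFiniteMeasure μ]
    {S : Set E} (hS : S.Nonempty) (hSc : IsClosed (convexHull ℝ S)) {f : α → E}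
    (hf : Integrable f μ) (hfS : ∀ᵐ t ∂μ, f t ∈ S) :
    ∫ t, f t ∂μ ∈ Icc 0 (μ.real univ) • convexHull ℝ S := by
  rcases eq_zero_or_neZero μ with rfl | _
  · obtain ⟨x, hx⟩ := hS
    rw [integral_zero_measure, ← zero_smul ℝ x]
    exact smul_mem_smul (by simp) (subset_convexHull ℝ S hx)
  rw [← measure_smul_average]
  exact smul_mem_smul ⟨measureReal_nonneg, le_rfl⟩
    ((convex_convexHull ℝ S).average_mem hSc (hfS.mono fun t ht => subset_convexHull ℝ S ht) hf)

lemma totallyBounded_range_integral_comp [CompleteSpace E] {μ : Measure α} [IsFiniteMeasure μ]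
    {e : ℕ → E} {K : α → ℕ} (hK : Measurable K) {σ : ι → α → ℕ} (hσ : ∀ i, Measurable (σ i))
    (hσK : ∀ i t, σ i t ≤ K t) {h : α → ℝ} (hh : Integrable h μ)
    (hσh : ∀ i, ∀ᵐ t ∂μ, ‖e (σ i t)‖ ≤ h t) :
    TotallyBounded (range fun i => ∫ t, e (σ i t) ∂μ) := by
  refine totallyBounded_iff.2 fun ε hε => ?_
  have hv : ∀ i, Integrable (fun t => e (σ i t)) μ := fun i =>
    hh.mono' (StronglyMeasurable.of_discrete.comp_measurable (hσ i)).aestronglyMeasurable (hσh i)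
  obtain ⟨M, hM⟩ := exists_setIntegral_compl_lt hh hK (half_pos hε)
  have hhull : IsCompact (convexHull ℝ (e '' Iic M)) :=
    ((finite_Iic M).image e).isCompact_convexHull ℝ
  obtain ⟨F, hF, hCF⟩ := totallyBounded_iff.1
    (isCompact_Icc.smul_set hhull (k := Icc 0 (μ.real univ))).totallyBounded (ε / 2) (half_pos hε)
  refine ⟨F, hF, ?_⟩
  rintro _ ⟨i, rfl⟩
  have hA : MeasurableSet {t | K t ≤ M} := hK measurableSet_Iic
  have hvS : ∀ᵐ t ∂μ.restrict {t | K t ≤ M}, e (σ i t) ∈ e '' Iic M :=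
    (ae_restrict_iff' hA).2 (.of_forall fun t ht => ⟨σ i t, (hσK i t).trans ht, rfl⟩)
  have hμA : (μ.restrict {t | K t ≤ M}).real univ ≤ μ.real univ :=
    (measureReal_restrict_apply_univ _).trans_le (measureReal_mono (subset_univ _))
  have hmem := smul_subset_smul_right (Icc_subset_Icc_right hμA)
    (integral_mem_Icc_smul_convexHull (nonempty_Iic.image e) hhull.isClosed (hv i).integrableOn hvS)
  obtain ⟨y, hyF, hy⟩ := mem_iUnion₂.1 (hCF hmem)
  have htail : dist (∫ t, e (σ i t) ∂μ) (∫ t in {t | K t ≤ M}, e (σ i t) ∂μ) < ε / 2 := by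
    rw [dist_eq_norm, ← integral_add_compl hA (hv i), add_sub_cancel_left]
    exact (norm_integral_le_integral_norm _).trans_lt ((integral_mono_ae (hv i).norm.integrableOn
      hh.integrableOn (ae_restrict_of_ae (hσh i))).trans_lt hM)
  exact mem_iUnion₂.2 ⟨y, hyF, (dist_triangle _ _ _).trans_lt (by linarith [mem_ball.1 hy])⟩

end integral

section hmncIntegral

variable {α ι E : Type*} [MeasurableSpace α] [Countable ι] [NormedAddCommGroup E]
  {μ : Measure α} {U : ι → α → E} {c : α → ℝ}

lemma ae_ofReal_hmnc_range_eq_iInf_netRadius {e : ℕ → E} (he : DenseRange e)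
    (hbound : ∀ i, ∀ᵐ t ∂μ, ‖U i t‖ ≤ c t) :
    ∀ᵐ t ∂μ, ENNReal.ofReal (hmnc (range fun i => U i t)) =
      ⨅ m, netRadius e m (range fun i => U i t) := by
  filter_upwards [ae_all_iff.2 hbound] with t ht
  exact ofReal_hmnc_eq_iInf_netRadius he
    (isBounded_closedBall.subset (range_subset_iff.2 fun i => mem_closedBall_zero_iff.2 (ht i)))

lemma ae_hmnc_range_le_norm (hbound : ∀ i, ∀ᵐ t ∂μ, ‖U i t‖ ≤ c t) :
    ∀ᵐ t ∂μ, hmnc (range fun i => U i t) ≤ ‖c t‖ := by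
  filter_upwards [ae_all_iff.2 hbound] with t ht
  exact hmnc_le_of_subset_closedBall (norm_nonneg _) (range_subset_iff.2 fun i =>
    mem_closedBall_zero_iff.2 ((ht i).trans (Real.le_norm_self _)))

lemma integrable_hmnc_range_of_stronglyMeasurable [SeparableSpace E]
    (hU : ∀ i, StronglyMeasurable (U i)) (hc : Integrable c μ)
    (hbound : ∀ i, ∀ᵐ t ∂μ, ‖U i t‖ ≤ c t) :
    Integrable (fun t => hmnc (range fun i => U i t)) μ := by
  obtain ⟨e, he⟩ := exists_dense_seq E
  have hmeas : AEStronglyMeasurable (fun t => hmnc (range fun i => U i t)) μ := by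
    refine (Measurable.iInf (measurable_netRadius_range hU e)).ennreal_toReal
      |>.aestronglyMeasurable.congr ?_
    filter_upwards [ae_ofReal_hmnc_range_eq_iInf_netRadius he hbound] with t ht
    rw [← ht, ENNReal.toReal_ofReal (hmnc_nonneg _)]
  refine hc.norm.mono' hmeas ?_
  filter_upwards [ae_hmnc_range_le_norm hbound] with t ht
  rwa [Real.norm_of_nonneg (hmnc_nonneg _)]

lemma exists_measurable_approx_hmnc_range {e : ℕ → E} (he : DenseRange e)
    (hU : ∀ i, StronglyMeasurable (U i)) (hbound : ∀ i, ∀ᵐ t ∂μ, ‖U i t‖ ≤ c t) {η : ℝ}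
    (hη : 0 < η) :
    ∃ K : α → ℕ, Measurable K ∧ ∃ σ : ι → α → ℕ, (∀ i, Measurable (σ i)) ∧ (∀ i t, σ i t ≤ K t) ∧
      ∀ i, ∀ᵐ t ∂μ, ‖U i t - e (σ i t)‖ ≤ hmnc (range fun i => U i t) + η := by
  obtain ⟨K, hK, σ, hσm, hσ⟩ := exists_measurable_netIndex hU e (ENNReal.ofReal_pos.2 hη).ne'
  refine ⟨K, hK, σ, hσm, fun i t => (hσ i t).1, fun i => ?_⟩
  filter_upwards [ae_ofReal_hmnc_range_eq_iInf_netRadius he hbound] with t ht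
  rw [← ENNReal.ofReal_le_ofReal_iff (add_nonneg (hmnc_nonneg _) hη.le), ofReal_norm,
    ENNReal.ofReal_add (hmnc_nonneg _) hη.le, ht]
  exact (hσ i t).2

variable [NormedSpace ℝ E] [CompleteSpace E] [SeparableSpace E] [IsFiniteMeasure μ]

theorem hmnc_range_integral_le_of_stronglyMeasurable (hUm : ∀ i, StronglyMeasurable (U i))
    (hU : ∀ i, Integrable (U i) μ) (hc : Integrable c μ) (hbound : ∀ i, ∀ᵐ t ∂μ, ‖U i t‖ ≤ c t) :
    hmnc (range fun i => ∫ t, U i t ∂μ) ≤ ∫ t, hmnc (range fun i => U i t) ∂μ := by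
  set φ : α → ℝ := fun t => hmnc (range fun i => U i t)
  have hφ : Integrable φ μ := integrable_hmnc_range_of_stronglyMeasurable hUm hc hbound
  refine le_of_forall_pos_le_add fun ε hε => ?_
  obtain ⟨e, he⟩ := exists_dense_seq E
  set s := μ.real univ
  set η := ε / (s + 1)
  have hη : 0 < η := by positivity
  have hsη : s * η ≤ ε := by
    calc s * η ≤ (s + 1) * η := by nlinarith
      _ = ε := mul_div_cancel₀ ε (by positivity)
  obtain ⟨K, hK, σ, hσm, hσK, hUσ⟩ := exists_measurable_approx_hmnc_range he hUm hbound hη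
  have hφη : Integrable (fun t => φ t + η) μ := hφ.add (integrable_const η)
  have hσh : ∀ i, ∀ᵐ t ∂μ, ‖e (σ i t)‖ ≤ c t + (φ t + η) := fun i => by
    filter_upwards [hbound i, hUσ i] with t h₁ h₂
    exact (norm_le_norm_add_norm_sub (U i t) (e (σ i t))).trans (add_le_add h₁ h₂)
  refine hmnc_le_of_forall_exists_dist_le
    (totallyBounded_range_integral_comp hK hσm hσK (hc.add hφη) hσh)
    (add_nonneg (integral_nonneg fun t => hmnc_nonneg _) hε.le) ?_
  rintro _ ⟨i, rfl⟩
  have hv : Integrable (fun t => e (σ i t)) μ := (hc.add hφη).mono'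
    (StronglyMeasurable.of_discrete.comp_measurable (hσm i)).aestronglyMeasurable (hσh i)
  refine ⟨_, mem_range_self i, ?_⟩
  calc dist (∫ t, U i t ∂μ) (∫ t, e (σ i t) ∂μ) = ‖∫ t, (U i t - e (σ i t)) ∂μ‖ := by
        rw [dist_eq_norm, integral_sub (hU i) hv]
    _ ≤ ∫ t, (φ t + η) ∂μ :=
        (norm_integral_le_integral_norm _).trans (integral_mono_ae ((hU i).sub hv).norm hφη (hUσ i))
    _ = ∫ t, φ t ∂μ + s * η := by
        rw [integral_add hφ (integrable_const η), integral_const, smul_eq_mul]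
    _ ≤ ∫ t, φ t ∂μ + ε := by linarith

theorem integrable_hmnc_range_and_hmnc_range_integral_le (hU : ∀ i, Integrable (U i) μ)
    (hc : Integrable c μ) (hbound : ∀ i, ∀ᵐ t ∂μ, ‖U i t‖ ≤ c t) :
    Integrable (fun t => hmnc (range fun i => U i t)) μ ∧
      hmnc (range fun i => ∫ t, U i t ∂μ) ≤ ∫ t, hmnc (range fun i => U i t) ∂μ := by
  set W := fun i => (hU i).1.mk (U i)
  have hUW : ∀ i, U i =ᵐ[μ] W i := fun i => (hU i).1.ae_eq_mk
  have hWbound : ∀ i, ∀ᵐ t ∂μ, ‖W i t‖ ≤ c t := fun i => by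
    filter_upwards [hbound i, hUW i] with t ht hWt
    rwa [← hWt]
  have hφ : (fun t => hmnc (range fun i => U i t)) =ᵐ[μ] fun t => hmnc (range fun i => W i t) := by
    filter_upwards [ae_all_iff.2 hUW] with t ht
    simp only [ht]
  simp only [integral_congr_ae (hUW _), integral_congr_ae hφ]
  exact ⟨(integrable_hmnc_range_of_stronglyMeasurable (fun i => (hU i).1.stronglyMeasurable_mk)
      hc hWbound).congr hφ.symm,
    hmnc_range_integral_le_of_stronglyMeasurable (fun i => (hU i).1.stronglyMeasurable_mk)
      (fun i => (hU i).congr (hUW i)) hc hWbound⟩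

end hmncIntegral

theorem stmt7 {E : Type*} [NormedAddCommGroup E] [NormedSpace ℝ E] [CompleteSpace E]
    [TopologicalSpace.SeparableSpace E]
    (a b : ℝ) (hab : a ≤ b)
    (B : Set (ℝ → E)) (hBc : B.Countable)
    (hInt : ∀ u ∈ B, IntegrableOn u (Set.Icc a b))
    (c : ℝ → ℝ) (hc : IntegrableOn c (Set.Icc a b))
    (hbound : ∀ u ∈ B, ∀ᵐ t ∂(volume.restrict (Set.Icc a b)), ‖u t‖ ≤ c t) :
    IntegrableOn (fun t => hmnc {y : E | ∃ u ∈ B, y = u t}) (Set.Icc a b) ∧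
    hmnc {y : E | ∃ u ∈ B, y = ∫ τ in a..b, u τ} ≤
      ∫ t in Set.Icc a b, hmnc {y : E | ∃ u ∈ B, y = u t} := by
  have := hBc.to_subtype
  have hrange : ∀ f : (ℝ → E) → E, {y : E | ∃ u ∈ B, y = f u} = range fun u : B => f u :=
    fun f => by ext; simp [eq_comm]
  have hinterval : ∀ u : ℝ → E, ∫ τ in a..b, u τ = ∫ τ in Icc a b, u τ := fun u => by
    rw [intervalIntegral.integral_of_le hab, integral_Icc_eq_integral_Ioc]
  simp only [hrange, hinterval]
  exact integrable_hmnc_range_and_hmnc_range_integral_le (fun u => hInt u u.2) hc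
    (fun u => hbound u u.2)
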